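/- Under the (A,B) signGD dynamics, there exists t ∈ ℕ such that |A(t')| ≤ σ₀²·η for all t' ≥ t. -/

import Mathlib

/-- The frequency-domain `(A,B)` signGD error dynamics with `a = σ₀²η`, `b = σ₁²η`:
`A(t+1) = A(t) − (a/3)(sgn(A+B) + sgn(A) + sgn(A−B))` and
`B(t+1) = B(t) − (b/2)(sgn(A+B) − sgn(A−B))`. -/
def SignGDDyn (σ0sq σ1sq η : ℝ) (A B : ℕ → ℝ) : Prop :=
  (∀ t, A (t+1) = A t - σ0sq * η / 3 *
      (Real.sign (A t + B t) + Real.sign (A t) + Real.sign (A t - B t))) ∧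
  (∀ t, B (t+1) = B t - σ1sq * η / 2 *
      (Real.sign (A t + B t) - Real.sign (A t - B t)))

/-!
The `B`-coordinate only enters the update of `A` through `sgn(A+B) + sgn(A) + sgn(A-B)`, which
has the sign of `A` and, when `A ≠ 0`, absolute value between `1` and `3` (one of `A ± B` has the
sign of `A`, since their sum is `2A`). Hence each step moves `A` towards `0` by between
`σ₀²η/3` and `σ₀²η`: it cannot leave the band `|A| ≤ σ₀²η`, and outside it `|A|` drops by at
least `σ₀²η/3`, so it enters the band after finitely many steps.
-/

open Filter

lemma eventually_le_of_le_max_sub {u : ℕ → ℝ} {M c : ℝ} (hc : 0 < c)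
    (h : ∀ t, u (t + 1) ≤ max M (u t - c)) : ∀ᶠ t in atTop, u t ≤ M := by
  have bound : ∀ t : ℕ, u t ≤ max M (u 0 - t * c) := by
    intro t
    induction t with
    | zero => simp
    | succ t ih =>
      calc u (t + 1) ≤ max M (u t - c) := h t
        _ ≤ max M (max M (u 0 - t * c) - c) := by gcongr
        _ ≤ max M (u 0 - (t + 1 : ℕ) * c) := by
          push_cast
          rw [← max_sub_sub_right]
          exact max_le (le_max_left _ _) (max_le_max (by linarith) (by linarith))
  obtain ⟨T, hT⟩ := exists_nat_ge ((u 0 - M) / c)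
  filter_upwards [eventually_ge_atTop T] with t ht
  have hT' : u 0 - M ≤ t * c := (div_le_iff₀ hc).mp (hT.trans (by exact_mod_cast ht))
  exact (bound t).trans (max_le le_rfl (by linarith))

lemma Real.neg_one_le_sign (r : ℝ) : -1 ≤ Real.sign r := by
  rcases Real.sign_apply_eq r with h | h | h <;> rw [h] <;> norm_num

lemma Real.sign_le_one (r : ℝ) : Real.sign r ≤ 1 := by
  rcases Real.sign_apply_eq r with h | h | h <;> rw [h] <;> norm_num

noncomputable def signSum (x y : ℝ) : ℝ :=
  Real.sign (x + y) + Real.sign x + Real.sign (x - y)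

lemma signSum_neg (x y : ℝ) : signSum (-x) (-y) = -signSum x y := by
  have hsum : -x + -y = -(x + y) := by ring
  have hdiff : -x - -y = -(x - y) := by ring
  simp only [signSum, hsum, hdiff, Real.sign_neg]
  ring

lemma signSum_zero_left (y : ℝ) : signSum 0 y = 0 := by
  simp only [signSum, zero_add, zero_sub, Real.sign_neg, Real.sign_zero]
  ring

lemma signSum_le_three (x y : ℝ) : signSum x y ≤ 3 := by
  unfold signSum
  linarith [Real.sign_le_one (x + y), Real.sign_le_one x, Real.sign_le_one (x - y)]

lemma one_le_signSum {x : ℝ} (hx : 0 < x) (y : ℝ) : 1 ≤ signSum x y := by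
  unfold signSum
  rw [Real.sign_of_pos hx]
  rcases lt_or_ge 0 (x + y) with h | h
  · linarith [Real.sign_of_pos h, Real.neg_one_le_sign (x - y)]
  · linarith [Real.sign_of_pos (show 0 < x - y by linarith), Real.neg_one_le_sign (x + y)]

lemma abs_sub_mul_signSum_le_of_pos {a x : ℝ} (ha : 0 ≤ a) (hx : 0 < x) (y : ℝ) :
    |x - a / 3 * signSum x y| ≤ max a (|x| - a / 3) := by
  have hlow : a / 3 ≤ a / 3 * signSum x y := by
    simpa using mul_le_mul_of_nonneg_left (one_le_signSum hx y) (by positivity : 0 ≤ a / 3)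
  have hup : a / 3 * signSum x y ≤ a := by
    nlinarith [signSum_le_three x y]
  rw [abs_of_pos hx, abs_le]
  constructor <;> linarith [le_max_left a (x - a / 3), le_max_right a (x - a / 3)]

lemma abs_sub_mul_signSum_le {a : ℝ} (ha : 0 ≤ a) (x y : ℝ) :
    |x - a / 3 * signSum x y| ≤ max a (|x| - a / 3) := by
  rcases lt_trichotomy x 0 with hx | rfl | hx
  · have := abs_sub_mul_signSum_le_of_pos ha (neg_pos.mpr hx) (-y)
    rwa [signSum_neg, mul_neg, sub_neg_eq_add, neg_add_eq_sub, ← neg_sub, abs_neg,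
      abs_neg] at this
  · simp [signSum_zero_left, ha]
  · exact abs_sub_mul_signSum_le_of_pos ha hx y

theorem signGD_A_eventually_bounded_general (σ0sq σ1sq η : ℝ)
    (h0 : 0 < σ0sq) (hη : 0 < η)
    (A B : ℕ → ℝ) (hdyn : SignGDDyn σ0sq σ1sq η A B) :
    ∃ t : ℕ, ∀ t' ≥ t, |A t'| ≤ σ0sq * η := by
  have ha : 0 < σ0sq * η := mul_pos h0 hη
  have step (t : ℕ) : |A (t + 1)| ≤ max (σ0sq * η) (|A t| - σ0sq * η / 3) := by
    rw [hdyn.1 t]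
    exact abs_sub_mul_signSum_le ha.le (A t) (B t)
  exact eventually_atTop.mp (eventually_le_of_le_max_sub (by positivity) step)

/-- Under the `(A,B)` signGD dynamics, eventually `|A(t')| ≤ σ₀²η` forever. -/
theorem signGD_A_eventually_bounded (σ0sq σ1sq η : ℝ)
    (h0 : 0 < σ0sq) (h1 : 0 < σ1sq) (hη : 0 < η)
    (A B : ℕ → ℝ) (hdyn : SignGDDyn σ0sq σ1sq η A B) :
    ∃ t : ℕ, ∀ t' ≥ t, |A t'| ≤ σ0sq * η :=
  signGD_A_eventually_bounded_general σ0sq σ1sq η h0 hη A B hdyn
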